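/- arXiv:2311.05519 — 9 statements merged into one kernel-verified Lean document; each statement's English description precedes it below -/
import Mathlib

section
/- Let q, k be positive integers, let μ_1,…,μ_q and λ_1,…,λ_k be complex numbers with μ_j ≠ λ_i for all j, i, let ℓ_1,…,ℓ_q ∈ ℂ^p, r_1,…,r_k ∈ ℂ^m, v_1,…,v_q ∈ ℂ^m, w_1,…,w_k ∈ ℂ^p. Then the Loewner matrix 𝕃 and shifted Loewner matrix 𝕃s satisfy the matrix identity 𝕃s − 𝕃·Λ = 𝕍·R, where Λ = diag(λ_1,…,λ_k), 𝕍 is the q×m matrix whose j-th row is v_jᵀ, and R is the m×k matrix whose i-th column is r_i. -/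
open Matrix Complex

/-- The Loewner matrix `𝕃` and shifted Loewner matrix `𝕃s` satisfy
`𝕃s − 𝕃·Λ = 𝕍·R`. -/
theorem loewner_sylvester_right
    (q k p m : ℕ) (hq : 0 < q) (hk : 0 < k)
    (μ : Fin q → ℂ) (lam : Fin k → ℂ)
    (hne : ∀ j i, μ j ≠ lam i)
    (l : Fin q → Fin p → ℂ) (r : Fin k → Fin m → ℂ)
    (v : Fin q → Fin m → ℂ) (w : Fin k → Fin p → ℂ)
    (L : Matrix (Fin q) (Fin k) ℂ)
    (hL : ∀ j i, L j i = (v j ⬝ᵥ r i - l j ⬝ᵥ w i) / (μ j - lam i))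
    (Ls : Matrix (Fin q) (Fin k) ℂ)
    (hLs : ∀ j i, Ls j i = (μ j * (v j ⬝ᵥ r i) - lam i * (l j ⬝ᵥ w i)) / (μ j - lam i))
    (Λ : Matrix (Fin k) (Fin k) ℂ) (hΛ : Λ = Matrix.diagonal lam)
    (V : Matrix (Fin q) (Fin m) ℂ) (hV : ∀ j a, V j a = v j a)
    (R : Matrix (Fin m) (Fin k) ℂ) (hR : ∀ a i, R a i = r i a) :
    Ls - L * Λ = V * R := by
  ext j i
  have hd : μ j - lam i ≠ 0 := sub_ne_zero.mpr (hne j i)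
  have hVR : (V * R) j i = v j ⬝ᵥ r i := by
    simp [Matrix.mul_apply, dotProduct, hV, hR]
  rw [Matrix.sub_apply, Matrix.mul_apply, hΛ]
  simp only [Matrix.diagonal_apply, mul_ite, mul_zero, Finset.sum_ite_eq', Finset.mem_univ,
    if_true]
  rw [hL, hLs, hVR]
  field_simp
  ring
end

section
/- Let q, k be positive integers, let μ_1,…,μ_q and λ_1,…,λ_k be complex numbers with μ_j ≠ λ_i for all j, i, and let ℓ_j ∈ ℂ^p, r_i ∈ ℂ^m, v_j ∈ ℂ^m, w_i ∈ ℂ^p be as in the Loewner data. Then the Loewner matrix 𝕃 satisfies the Sylvester equation M·𝕃 − 𝕃·Λ = 𝕍·R − L·𝕎, where M = diag(μ_1,…,μ_q), Λ = diag(λ_1,…,λ_k), L is the q×p matrix whose j-th row is ℓ_jᵀ, R is the m×k matrix whose i-th column is r_i, 𝕍 is the q×m matrix whose j-th row is v_jᵀ, and 𝕎 is the p×k matrix whose i-th column is w_i. -/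
open Matrix Complex

theorem Matrix.diagonal_mul_sub_mul_diagonal_apply {n o R : Type*} [Fintype n] [Fintype o]
    [DecidableEq n] [DecidableEq o] [CommRing R] (μ : n → R) (lam : o → R)
    (A : Matrix n o R) (j : n) (i : o) :
    (diagonal μ * A - A * diagonal lam) j i = (μ j - lam i) * A j i := by
  rw [sub_apply, diagonal_mul, mul_diagonal, sub_mul, mul_comm (A j i)]

theorem Matrix.mul_transpose_of_apply {n o m R : Type*} [Fintype m] [Mul R] [AddCommMonoid R]
    (a : n → m → R) (b : o → m → R) (j : n) (i : o) :
    (of a * (of b)ᵀ) j i = a j ⬝ᵥ b i :=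
  rfl

theorem loewner_matrix_sylvester_general
    (q k p m : ℕ)
    (μ : Fin q → ℂ) (lam : Fin k → ℂ)
    (hne : ∀ j i, μ j ≠ lam i)
    (l : Fin q → Fin p → ℂ) (r : Fin k → Fin m → ℂ)
    (v : Fin q → Fin m → ℂ) (w : Fin k → Fin p → ℂ)
    (L : Matrix (Fin q) (Fin k) ℂ)
    (hL : ∀ j i, L j i = (v j ⬝ᵥ r i - l j ⬝ᵥ w i) / (μ j - lam i))
    (M : Matrix (Fin q) (Fin q) ℂ) (hM : M = Matrix.diagonal μ)
    (Λ : Matrix (Fin k) (Fin k) ℂ) (hΛ : Λ = Matrix.diagonal lam)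
    (Lmat : Matrix (Fin q) (Fin p) ℂ) (hLmat : ∀ j a, Lmat j a = l j a)
    (R : Matrix (Fin m) (Fin k) ℂ) (hR : ∀ a i, R a i = r i a)
    (V : Matrix (Fin q) (Fin m) ℂ) (hV : ∀ j a, V j a = v j a)
    (W : Matrix (Fin p) (Fin k) ℂ) (hW : ∀ a i, W a i = w i a) :
    M * L - L * Λ = V * R - Lmat * W := by
  rw [show V = of v from ext hV, show R = (of r)ᵀ from ext hR, show Lmat = of l from ext hLmat,
    show W = (of w)ᵀ from ext hW, hM, hΛ]
  ext j i
  rw [diagonal_mul_sub_mul_diagonal_apply, hL, mul_div_cancel₀ _ (sub_ne_zero.2 (hne j i)),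
    Matrix.sub_apply, mul_transpose_of_apply, mul_transpose_of_apply]

/-- The Loewner matrix `𝕃` satisfies the Sylvester equation
`M·𝕃 − 𝕃·Λ = 𝕍·R − L·𝕎`. -/
theorem loewner_matrix_sylvester
    (q k p m : ℕ) (hq : 0 < q) (hk : 0 < k)
    (μ : Fin q → ℂ) (lam : Fin k → ℂ)
    (hne : ∀ j i, μ j ≠ lam i)
    (l : Fin q → Fin p → ℂ) (r : Fin k → Fin m → ℂ)
    (v : Fin q → Fin m → ℂ) (w : Fin k → Fin p → ℂ)
    (L : Matrix (Fin q) (Fin k) ℂ)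
    (hL : ∀ j i, L j i = (v j ⬝ᵥ r i - l j ⬝ᵥ w i) / (μ j - lam i))
    (M : Matrix (Fin q) (Fin q) ℂ) (hM : M = Matrix.diagonal μ)
    (Λ : Matrix (Fin k) (Fin k) ℂ) (hΛ : Λ = Matrix.diagonal lam)
    (Lmat : Matrix (Fin q) (Fin p) ℂ) (hLmat : ∀ j a, Lmat j a = l j a)
    (R : Matrix (Fin m) (Fin k) ℂ) (hR : ∀ a i, R a i = r i a)
    (V : Matrix (Fin q) (Fin m) ℂ) (hV : ∀ j a, V j a = v j a)
    (W : Matrix (Fin p) (Fin k) ℂ) (hW : ∀ a i, W a i = w i a) :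
    M * L - L * Λ = V * R - Lmat * W :=
  loewner_matrix_sylvester_general q k p m μ lam hne l r v w L hL M hM Λ hΛ Lmat hLmat R hR V hV W
    hW
end

section
/- Let q, k be positive integers, let μ_1,…,μ_q and λ_1,…,λ_k be complex numbers with μ_j ≠ λ_i for all j, i, and let ℓ_j ∈ ℂ^p, r_i ∈ ℂ^m, v_j ∈ ℂ^m, w_i ∈ ℂ^p be as in the Loewner data. Then the shifted Loewner matrix 𝕃s satisfies the Sylvester equation M·𝕃s − 𝕃s·Λ = M·𝕍·R − L·𝕎·Λ, where M = diag(μ_1,…,μ_q), Λ = diag(λ_1,…,λ_k), L is the q×p matrix whose j-th row is ℓ_jᵀ, R is the m×k matrix whose i-th column is r_i, 𝕍 is the q×m matrix whose j-th row is v_jᵀ, and 𝕎 is the p×k matrix whose i-th column is w_i. -/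
/-! With diagonal `M` and `Λ`, the Sylvester operator `X ↦ M X - X Λ` multiplies the `(j, i)`
entry by `μ j - λ i`, which cancels the denominator of the Loewner entry and leaves the
numerator `μ j (v j ⬝ r i) - λ i (l j ⬝ w i)`, the `(j, i)` entry of `M 𝕍 R - L 𝕎 Λ`. -/

open Matrix

namespace Matrix

variable {ι κ α : Type*} [Fintype ι] [Fintype κ] [DecidableEq ι] [DecidableEq κ]

theorem diagonal_mul_sub_mul_diagonal_apply_s3 [CommRing α] (d₁ : ι → α) (d₂ : κ → α)
    (A : Matrix ι κ α) (i : ι) (j : κ) :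
    (diagonal d₁ * A - A * diagonal d₂) i j = (d₁ i - d₂ j) * A i j := by
  rw [sub_apply, diagonal_mul, mul_diagonal, sub_mul, mul_comm (A i j)]

theorem diagonal_mul_sub_mul_diagonal_eq_of_apply_eq_div [Field α] {d₁ : ι → α} {d₂ : κ → α}
    (hd : ∀ i j, d₁ i ≠ d₂ j) {A N : Matrix ι κ α} (hA : ∀ i j, A i j = N i j / (d₁ i - d₂ j)) :
    diagonal d₁ * A - A * diagonal d₂ = N := by
  ext i j
  rw [diagonal_mul_sub_mul_diagonal_apply_s3, hA, mul_div_cancel₀ _ (sub_ne_zero.2 (hd i j))]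

end Matrix

theorem shifted_loewner_matrix_sylvester_general
    (q k p m : ℕ)
    (μ : Fin q → ℂ) (lam : Fin k → ℂ)
    (hne : ∀ j i, μ j ≠ lam i)
    (l : Fin q → Fin p → ℂ) (r : Fin k → Fin m → ℂ)
    (v : Fin q → Fin m → ℂ) (w : Fin k → Fin p → ℂ)
    (Ls : Matrix (Fin q) (Fin k) ℂ)
    (hLs : ∀ j i, Ls j i = (μ j * (v j ⬝ᵥ r i) - lam i * (l j ⬝ᵥ w i)) / (μ j - lam i))
    (M : Matrix (Fin q) (Fin q) ℂ) (hM : M = Matrix.diagonal μ)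
    (Λ : Matrix (Fin k) (Fin k) ℂ) (hΛ : Λ = Matrix.diagonal lam)
    (Lmat : Matrix (Fin q) (Fin p) ℂ) (hLmat : ∀ j a, Lmat j a = l j a)
    (R : Matrix (Fin m) (Fin k) ℂ) (hR : ∀ a i, R a i = r i a)
    (V : Matrix (Fin q) (Fin m) ℂ) (hV : ∀ j a, V j a = v j a)
    (W : Matrix (Fin p) (Fin k) ℂ) (hW : ∀ a i, W a i = w i a) :
    M * Ls - Ls * Λ = M * V * R - Lmat * W * Λ := by
  obtain rfl : Lmat = of l := ext hLmat
  obtain rfl : R = (of r)ᵀ := ext hR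
  obtain rfl : V = of v := ext hV
  obtain rfl : W = (of w)ᵀ := ext hW
  subst hM hΛ
  refine diagonal_mul_sub_mul_diagonal_eq_of_apply_eq_div hne fun j i => ?_
  rw [hLs, Matrix.mul_assoc, Matrix.sub_apply, diagonal_mul, mul_diagonal, Matrix.mul_apply',
    Matrix.mul_apply', mul_comm _ (lam i)]
  rfl

/-- The shifted Loewner matrix `𝕃s` satisfies the Sylvester equation
`M·𝕃s − 𝕃s·Λ = M·𝕍·R − L·𝕎·Λ`. -/
theorem shifted_loewner_matrix_sylvester
    (q k p m : ℕ) (hq : 0 < q) (hk : 0 < k)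
    (μ : Fin q → ℂ) (lam : Fin k → ℂ)
    (hne : ∀ j i, μ j ≠ lam i)
    (l : Fin q → Fin p → ℂ) (r : Fin k → Fin m → ℂ)
    (v : Fin q → Fin m → ℂ) (w : Fin k → Fin p → ℂ)
    (Ls : Matrix (Fin q) (Fin k) ℂ)
    (hLs : ∀ j i, Ls j i = (μ j * (v j ⬝ᵥ r i) - lam i * (l j ⬝ᵥ w i)) / (μ j - lam i))
    (M : Matrix (Fin q) (Fin q) ℂ) (hM : M = Matrix.diagonal μ)
    (Λ : Matrix (Fin k) (Fin k) ℂ) (hΛ : Λ = Matrix.diagonal lam)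
    (Lmat : Matrix (Fin q) (Fin p) ℂ) (hLmat : ∀ j a, Lmat j a = l j a)
    (R : Matrix (Fin m) (Fin k) ℂ) (hR : ∀ a i, R a i = r i a)
    (V : Matrix (Fin q) (Fin m) ℂ) (hV : ∀ j a, V j a = v j a)
    (W : Matrix (Fin p) (Fin k) ℂ) (hW : ∀ a i, W a i = w i a) :
    M * Ls - Ls * Λ = M * V * R - Lmat * W * Λ :=
  shifted_loewner_matrix_sylvester_general q k p m μ lam hne l r v w Ls hLs M hM Λ hΛ Lmat hLmat R
    hR V hV W hW
end

section
/- Let k be a positive integer (q = k), let μ_1,…,μ_k and λ_1,…,λ_k be complex numbers with μ_j ≠ λ_i for all j, i, and let ℓ_j ∈ ℂ^p, r_i ∈ ℂ^m, v_j ∈ ℂ^m, w_i ∈ ℂ^p be tangential data. Fix i ∈ {1,…,k} and suppose the matrix 𝕃s − λ_i·𝕃 is invertible. Then the Loewner interpolant H(s) = 𝕎(𝕃s − s𝕃)^{−1}𝕍 satisfies the right tangential interpolation condition H(λ_i)·r_i = w_i, i.e., 𝕎(𝕃s − λ_i𝕃)^{−1}𝕍 r_i = w_i. -/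
open Matrix Complex

/-!
Evaluating the pencil at a right interpolation point collapses its matching column: the
`ℓⱼᵀwᵢ` terms cancel and the `(μⱼ - λᵢ)` denominators divide out, so column `i` of
`𝕃s − λᵢ𝕃` is exactly `𝕍 rᵢ`. Hence `(𝕃s − λᵢ𝕃)⁻¹ 𝕍 rᵢ = eᵢ`, and `𝕎 eᵢ = wᵢ`.
-/

lemma shifted_loewner_sub_smul_loewner_entry {K : Type*} [Field K] {μ lam a b : K}
    (h : μ ≠ lam) :
    (μ * a - lam * b) / (μ - lam) - lam * ((a - b) / (μ - lam)) = a := by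
  field_simp [sub_ne_zero.mpr h]
  ring

section Loewner

variable {K ι κ σ : Type*} [Field K] [Fintype ι] [DecidableEq ι] [Fintype κ]

lemma loewner_pencil_mulVec_single_one [Fintype σ] {μ lam : ι → K} (hne : ∀ j i, μ j ≠ lam i)
    {l : ι → σ → K} {r v : ι → κ → K} {w : ι → σ → K}
    {L Ls : Matrix ι ι K} (hL : ∀ j i, L j i = (v j ⬝ᵥ r i - l j ⬝ᵥ w i) / (μ j - lam i))
    (hLs : ∀ j i, Ls j i = (μ j * (v j ⬝ᵥ r i) - lam i * (l j ⬝ᵥ w i)) / (μ j - lam i))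
    {V : Matrix ι κ K} (hV : ∀ j a, V j a = v j a) (i : ι) :
    (Ls - lam i • L) *ᵥ Pi.single i 1 = V *ᵥ r i := by
  ext j
  have hVr : (V *ᵥ r i) j = v j ⬝ᵥ r i := by
    simp only [mulVec, dotProduct, hV]
  rw [mulVec_single_one, hVr, col_apply, Matrix.sub_apply, Matrix.smul_apply, smul_eq_mul, hL, hLs]
  exact shifted_loewner_sub_smul_loewner_entry (hne j i)

lemma mulVec_single_one_eq_of_col {W : Matrix σ ι K} {w : ι → σ → K}
    (hW : ∀ a i, W a i = w i a) (i : ι) : W *ᵥ Pi.single i 1 = w i := by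
  ext a
  rw [mulVec_single_one, col_apply, hW]

end Loewner

theorem loewner_right_tangential_interpolation_general
    (k p m : ℕ)
    (μ : Fin k → ℂ) (lam : Fin k → ℂ)
    (hne : ∀ j i, μ j ≠ lam i)
    (l : Fin k → Fin p → ℂ) (r : Fin k → Fin m → ℂ)
    (v : Fin k → Fin m → ℂ) (w : Fin k → Fin p → ℂ)
    (L : Matrix (Fin k) (Fin k) ℂ)
    (hL : ∀ j i, L j i = (v j ⬝ᵥ r i - l j ⬝ᵥ w i) / (μ j - lam i))
    (Ls : Matrix (Fin k) (Fin k) ℂ)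
    (hLs : ∀ j i, Ls j i = (μ j * (v j ⬝ᵥ r i) - lam i * (l j ⬝ᵥ w i)) / (μ j - lam i))
    (V : Matrix (Fin k) (Fin m) ℂ) (hV : ∀ j a, V j a = v j a)
    (W : Matrix (Fin p) (Fin k) ℂ) (hW : ∀ a i, W a i = w i a)
    (i : Fin k)
    (hinv : IsUnit (Ls - lam i • L)) :
    (W * (Ls - lam i • L)⁻¹ * V) *ᵥ r i = w i := by
  have := hinv.invertible
  have hsolve : (Ls - lam i • L)⁻¹ *ᵥ (V *ᵥ r i) = Pi.single i 1 :=
    inv_mulVec_eq_vec (loewner_pencil_mulVec_single_one hne hL hLs hV i).symm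
  rw [← mulVec_mulVec, ← mulVec_mulVec, hsolve, mulVec_single_one_eq_of_col hW]

/-- With `q = k`, if the pencil matrix `𝕃s − λ_i·𝕃` is invertible, the Loewner
interpolant `H(s) = 𝕎(𝕃s − s𝕃)⁻¹𝕍` satisfies the right tangential interpolation condition
`H(λ_i)·r_i = w_i`. -/
theorem loewner_right_tangential_interpolation
    (k p m : ℕ) (hk : 0 < k)
    (μ : Fin k → ℂ) (lam : Fin k → ℂ)
    (hne : ∀ j i, μ j ≠ lam i)
    (l : Fin k → Fin p → ℂ) (r : Fin k → Fin m → ℂ)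
    (v : Fin k → Fin m → ℂ) (w : Fin k → Fin p → ℂ)
    (L : Matrix (Fin k) (Fin k) ℂ)
    (hL : ∀ j i, L j i = (v j ⬝ᵥ r i - l j ⬝ᵥ w i) / (μ j - lam i))
    (Ls : Matrix (Fin k) (Fin k) ℂ)
    (hLs : ∀ j i, Ls j i = (μ j * (v j ⬝ᵥ r i) - lam i * (l j ⬝ᵥ w i)) / (μ j - lam i))
    (V : Matrix (Fin k) (Fin m) ℂ) (hV : ∀ j a, V j a = v j a)
    (W : Matrix (Fin p) (Fin k) ℂ) (hW : ∀ a i, W a i = w i a)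
    (i : Fin k)
    (hinv : IsUnit (Ls - lam i • L)) :
    (W * (Ls - lam i • L)⁻¹ * V) *ᵥ r i = w i :=
  loewner_right_tangential_interpolation_general k p m μ lam hne l r v w L hL Ls hLs V hV W hW i
    hinv
end

section
/- Let k be a positive integer (q = k), let μ_1,…,μ_k and λ_1,…,λ_k be complex numbers with μ_j ≠ λ_i for all j, i, and let ℓ_j ∈ ℂ^p, r_i ∈ ℂ^m, v_j ∈ ℂ^m, w_i ∈ ℂ^p be tangential data. Fix j ∈ {1,…,k} and suppose the matrix 𝕃s − μ_j·𝕃 is invertible. Then the Loewner interpolant H(s) = 𝕎(𝕃s − s𝕃)^{−1}𝕍 satisfies the left tangential interpolation condition ℓ_jᵀ·H(μ_j) = v_jᵀ, i.e., ℓ_jᵀ 𝕎(𝕃s − μ_j𝕃)^{−1}𝕍 = v_jᵀ. -/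
open Matrix Complex

/-- With `q = k`, if the pencil matrix `𝕃s − μ_j·𝕃` is invertible, the Loewner
interpolant `H(s) = 𝕎(𝕃s − s𝕃)⁻¹𝕍` satisfies the left tangential interpolation condition
`ℓ_jᵀ·H(μ_j) = v_jᵀ`. -/
theorem loewner_left_tangential_interpolation
    (k p m : ℕ) (hk : 0 < k)
    (μ : Fin k → ℂ) (lam : Fin k → ℂ)
    (hne : ∀ j i, μ j ≠ lam i)
    (l : Fin k → Fin p → ℂ) (r : Fin k → Fin m → ℂ)
    (v : Fin k → Fin m → ℂ) (w : Fin k → Fin p → ℂ)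
    (L : Matrix (Fin k) (Fin k) ℂ)
    (hL : ∀ j i, L j i = (v j ⬝ᵥ r i - l j ⬝ᵥ w i) / (μ j - lam i))
    (Ls : Matrix (Fin k) (Fin k) ℂ)
    (hLs : ∀ j i, Ls j i = (μ j * (v j ⬝ᵥ r i) - lam i * (l j ⬝ᵥ w i)) / (μ j - lam i))
    (V : Matrix (Fin k) (Fin m) ℂ) (hV : ∀ j a, V j a = v j a)
    (W : Matrix (Fin p) (Fin k) ℂ) (hW : ∀ a i, W a i = w i a)
    (j : Fin k)
    (hinv : IsUnit (Ls - μ j • L)) :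
    l j ᵥ* (W * (Ls - μ j • L)⁻¹ * V) = v j := by
  set A := Ls - μ j • L with hA
  have hrow : l j ᵥ* W = A j := by
    funext i
    have hd : μ j - lam i ≠ 0 := sub_ne_zero.mpr (hne j i)
    have : A j i = l j ⬝ᵥ w i := by
      simp only [hA, Matrix.sub_apply, Matrix.smul_apply, hLs, hL, smul_eq_mul]
      field_simp
      ring
    rw [this]
    simp [Matrix.vecMul, dotProduct, hW, mul_comm]
  have hAinv : A * A⁻¹ = 1 :=
    Matrix.mul_nonsing_inv A ((Matrix.isUnit_iff_isUnit_det A).mp hinv)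
  calc l j ᵥ* (W * A⁻¹ * V) = ((l j ᵥ* W) ᵥ* A⁻¹) ᵥ* V := by
        rw [← Matrix.vecMul_vecMul, ← Matrix.vecMul_vecMul]
    _ = ((A * A⁻¹) j) ᵥ* V := by rw [hrow]; rfl
    _ = v j := by
        rw [hAinv]
        funext i
        simp [Matrix.vecMul, dotProduct, Matrix.one_apply, hV]
end

section
/- Let E, A ∈ ℂ^{n×n}, B ∈ ℂ^{n×m}, C ∈ ℂ^{p×n} define the transfer function H(s) = C(sE − A)^{−1}B. Let μ_1,…,μ_q and λ_1,…,λ_k be complex numbers with μ_j ≠ λ_i for all j, i, such that all matrices λ_iE − A and μ_jE − A are invertible, and let ℓ_j ∈ ℂ^p and r_i ∈ ℂ^m. Define the data w_i = H(λ_i)r_i and v_jᵀ = ℓ_jᵀH(μ_j), the right projector ℛ ∈ ℂ^{n×k} whose i-th column is (λ_iE − A)^{−1}B r_i, and the left projector 𝒪 ∈ ℂ^{q×n} whose j-th row is ℓ_jᵀ C(μ_jE − A)^{−1}. Then 𝒪·E·ℛ = −𝕃, where 𝕃 is the Loewner matrix of this data; that is, for all j, i: ℓ_jᵀ C(μ_jE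 − A)^{−1} E (λ_iE − A)^{−1} B r_i = −(v_jᵀ r_i − ℓ_jᵀ w_i)/(μ_j − λ_i). -/
open Matrix Complex

/-- For data generated by the transfer function `H(s) = C(sE − A)⁻¹B`, the
projected matrix `𝒪·E·ℛ` equals minus the Loewner matrix: for all `j, i`,
`ℓ_jᵀ C(μ_jE − A)⁻¹ E (λ_iE − A)⁻¹ B r_i = −(v_jᵀ r_i − ℓ_jᵀ w_i)/(μ_j − λ_i)`. -/
theorem projected_E_eq_neg_loewner
    (n q k p m : ℕ)
    (E A : Matrix (Fin n) (Fin n) ℂ)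
    (B : Matrix (Fin n) (Fin m) ℂ) (C : Matrix (Fin p) (Fin n) ℂ)
    (μ : Fin q → ℂ) (lam : Fin k → ℂ)
    (hne : ∀ j i, μ j ≠ lam i)
    (hlamInv : ∀ i, IsUnit (lam i • E - A))
    (hmuInv : ∀ j, IsUnit (μ j • E - A))
    (l : Fin q → Fin p → ℂ) (r : Fin k → Fin m → ℂ)
    (w : Fin k → Fin p → ℂ) (hw : ∀ i, w i = (C * (lam i • E - A)⁻¹ * B) *ᵥ r i)
    (v : Fin q → Fin m → ℂ) (hv : ∀ j, v j = l j ᵥ* (C * (μ j • E - A)⁻¹ * B)) :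
    ∀ j i, l j ⬝ᵥ ((C * (μ j • E - A)⁻¹ * E * (lam i • E - A)⁻¹ * B) *ᵥ r i)
      = -((v j ⬝ᵥ r i - l j ⬝ᵥ w i) / (μ j - lam i)) := by
  intro j i
  have hsub : μ j - lam i ≠ 0 := sub_ne_zero.mpr (hne j i)
  set M := μ j • E - A with hMdef
  set N := lam i • E - A with hNdef
  have hM : IsUnit M.det := (Matrix.isUnit_iff_isUnit_det M).mp (hmuInv j)
  have hN : IsUnit N.det := (Matrix.isUnit_iff_isUnit_det N).mp (hlamInv i)
  have hMN : (μ j - lam i) • E = M - N := by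
    rw [hMdef, hNdef, sub_smul]; abel
  have key : (μ j - lam i) • (M⁻¹ * E * N⁻¹) = N⁻¹ - M⁻¹ := by
    calc (μ j - lam i) • (M⁻¹ * E * N⁻¹)
        = M⁻¹ * ((μ j - lam i) • E) * N⁻¹ := by
          rw [Matrix.mul_smul, Matrix.smul_mul]
      _ = M⁻¹ * (M - N) * N⁻¹ := by rw [hMN]
      _ = N⁻¹ - M⁻¹ := by
          rw [mul_sub, sub_mul, Matrix.nonsing_inv_mul M hM,
            mul_assoc, Matrix.mul_nonsing_inv N hN, one_mul, mul_one]
  have key2 : (μ j - lam i) • (C * M⁻¹ * E * N⁻¹ * B)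
      = C * N⁻¹ * B - C * M⁻¹ * B := by
    calc (μ j - lam i) • (C * M⁻¹ * E * N⁻¹ * B)
        = C * ((μ j - lam i) • (M⁻¹ * E * N⁻¹)) * B := by
          rw [Matrix.mul_smul, Matrix.smul_mul]; simp only [Matrix.mul_assoc]
      _ = C * (N⁻¹ - M⁻¹) * B := by rw [key]
      _ = C * N⁻¹ * B - C * M⁻¹ * B := by rw [Matrix.mul_sub, Matrix.sub_mul]
  have main : (μ j - lam i) * (l j ⬝ᵥ ((C * M⁻¹ * E * N⁻¹ * B) *ᵥ r i))
      = l j ⬝ᵥ w i - v j ⬝ᵥ r i := by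
    rw [hw, hv, ← Matrix.dotProduct_mulVec, ← hMdef, ← hNdef,
      ← dotProduct_sub, ← Matrix.sub_mulVec, ← key2, Matrix.smul_mulVec,
      dotProduct_smul, smul_eq_mul]
  rw [← neg_div, neg_sub, eq_div_iff hsub]
  linear_combination main
end

section
/- Let E, A ∈ ℂ^{n×n}, B ∈ ℂ^{n×m}, C ∈ ℂ^{p×n} define the transfer function H(s) = C(sE − A)^{−1}B. Let μ_1,…,μ_q and λ_1,…,λ_k be complex numbers with μ_j ≠ λ_i for all j, i, such that all matrices λ_iE − A and μ_jE − A are invertible, and let ℓ_j ∈ ℂ^p and r_i ∈ ℂ^m. Define the data w_i = H(λ_i)r_i and v_jᵀ = ℓ_jᵀH(μ_j), the right projector ℛ ∈ ℂ^{n×k} whose i-th column is (λ_iE − A)^{−1}B r_i, and the left projector 𝒪 ∈ ℂ^{q×n} whose j-th row is ℓ_jᵀ C(μ_jE − A)^{−1}. Then 𝒪·A·ℛ = −𝕃s, where 𝕃s is the shifted Loewner matrix of this data; that is, for all j, i: ℓ_jᵀ C(μ_jE − A)^{−1} A (λ_iE − A)^{−1} B r_i = −(μ_j v_jᵀ r_i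 − λ_i ℓ_jᵀ w_i)/(μ_j − λ_i). -/
open Matrix Complex

/-- For data generated by the transfer function `H(s) = C(sE − A)⁻¹B`, the
projected matrix `𝒪·A·ℛ` equals minus the shifted Loewner matrix: for all `j, i`,
`ℓ_jᵀ C(μ_jE − A)⁻¹ A (λ_iE − A)⁻¹ B r_i = −(μ_j v_jᵀ r_i − λ_i ℓ_jᵀ w_i)/(μ_j − λ_i)`. -/
theorem projected_A_eq_neg_shifted_loewner
    (n q k p m : ℕ)
    (E A : Matrix (Fin n) (Fin n) ℂ)
    (B : Matrix (Fin n) (Fin m) ℂ) (C : Matrix (Fin p) (Fin n) ℂ)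
    (μ : Fin q → ℂ) (lam : Fin k → ℂ)
    (hne : ∀ j i, μ j ≠ lam i)
    (hlamInv : ∀ i, IsUnit (lam i • E - A))
    (hmuInv : ∀ j, IsUnit (μ j • E - A))
    (l : Fin q → Fin p → ℂ) (r : Fin k → Fin m → ℂ)
    (w : Fin k → Fin p → ℂ) (hw : ∀ i, w i = (C * (lam i • E - A)⁻¹ * B) *ᵥ r i)
    (v : Fin q → Fin m → ℂ) (hv : ∀ j, v j = l j ᵥ* (C * (μ j • E - A)⁻¹ * B)) :
    ∀ j i, l j ⬝ᵥ ((C * (μ j • E - A)⁻¹ * A * (lam i • E - A)⁻¹ * B) *ᵥ r i)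
      = -((μ j * (v j ⬝ᵥ r i) - lam i * (l j ⬝ᵥ w i)) / (μ j - lam i)) := by
  intro j i
  set M := μ j • E - A with hM
  set N := lam i • E - A with hN
  have hdN : IsUnit N.det := (Matrix.isUnit_iff_isUnit_det N).mp (hlamInv i)
  have hdM : IsUnit M.det := (Matrix.isUnit_iff_isUnit_det M).mp (hmuInv j)
  have hd : lam i - μ j ≠ 0 := sub_ne_zero.2 (Ne.symm (hne j i))
  have hd' : μ j - lam i ≠ 0 := sub_ne_zero.2 (hne j i)
  have hA : (lam i - μ j) • A = μ j • N - lam i • M := by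
    rw [hM, hN]; module
  have key : M⁻¹ * A * N⁻¹ = (lam i - μ j)⁻¹ • (μ j • M⁻¹ - lam i • N⁻¹) := by
    have h1 : (lam i - μ j) • (M⁻¹ * A * N⁻¹) = μ j • M⁻¹ - lam i • N⁻¹ := by
      calc (lam i - μ j) • (M⁻¹ * A * N⁻¹)
          = M⁻¹ * ((lam i - μ j) • A) * N⁻¹ := by
            simp [Matrix.mul_smul, Matrix.smul_mul]
        _ = μ j • (M⁻¹ * (N * N⁻¹)) - lam i • (M⁻¹ * M * N⁻¹) := by
            rw [hA]; simp [Matrix.mul_sub, Matrix.sub_mul, Matrix.mul_smul, Matrix.smul_mul,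
              mul_assoc]
        _ = μ j • M⁻¹ - lam i • N⁻¹ := by
            rw [Matrix.mul_nonsing_inv _ hdN, Matrix.nonsing_inv_mul _ hdM]
            simp
    rw [← h1, smul_smul, inv_mul_cancel₀ hd, one_smul]
  have hassoc : C * M⁻¹ * A * N⁻¹ * B = C * (M⁻¹ * A * N⁻¹) * B := by
    simp only [Matrix.mul_assoc]
  have hvr : v j ⬝ᵥ r i = l j ⬝ᵥ (C * M⁻¹ * B) *ᵥ r i := by
    rw [hv, Matrix.dotProduct_mulVec]
  have hlw : l j ⬝ᵥ w i = l j ⬝ᵥ (C * N⁻¹ * B) *ᵥ r i := by rw [hw]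
  have e1 : l j ⬝ᵥ ((C * ((lam i - μ j)⁻¹ • (μ j • M⁻¹ - lam i • N⁻¹)) * B) *ᵥ r i)
      = (lam i - μ j)⁻¹ * (μ j * (l j ⬝ᵥ (C * M⁻¹ * B) *ᵥ r i)
        - lam i * (l j ⬝ᵥ (C * N⁻¹ * B) *ᵥ r i)) := by
    simp [Matrix.mul_smul, Matrix.smul_mul, Matrix.mul_sub, Matrix.sub_mul,
      Matrix.sub_mulVec, Matrix.smul_mulVec, dotProduct_sub, mul_sub]
  rw [hassoc, key, hvr, hlw, e1]
  generalize l j ⬝ᵥ (C * M⁻¹ * B) *ᵥ r i = a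
  generalize l j ⬝ᵥ (C * N⁻¹ * B) *ᵥ r i = b
  field_simp
  ring
end

section
/- Let P_0, P_1 be p×m complex matrices and H(s) = P_0 + s·P_1. Let μ_1,…,μ_q and λ_1,…,λ_k be complex numbers with μ_j ≠ λ_i for all j, i, let ℓ_j ∈ ℂ^p and r_i ∈ ℂ^m, and generate the tangential data w_i = H(λ_i)r_i and v_jᵀ = ℓ_jᵀH(μ_j). Then the Loewner matrix of this data factors as 𝕃 = L·P_1·R, where L is the q×p matrix whose j-th row is ℓ_jᵀ and R is the m×k matrix whose i-th column is r_i; equivalently, 𝕃_{ji} = ℓ_jᵀ P_1 r_i for all j, i. -/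
open Matrix Complex

/-- For data generated by `H(s) = P₀ + s·P₁`, the Loewner matrix factors as
`𝕃 = L·P₁·R`; equivalently `𝕃_{ji} = ℓ_jᵀ P₁ r_i` for all `j, i`. -/
theorem loewner_of_linear_poly
    (q k p m : ℕ) (P0 P1 : Matrix (Fin p) (Fin m) ℂ)
    (μ : Fin q → ℂ) (lam : Fin k → ℂ)
    (hne : ∀ j i, μ j ≠ lam i)
    (l : Fin q → Fin p → ℂ) (r : Fin k → Fin m → ℂ)
    (w : Fin k → Fin p → ℂ) (hw : ∀ i, w i = (P0 + lam i • P1) *ᵥ r i)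
    (v : Fin q → Fin m → ℂ) (hv : ∀ j, v j = l j ᵥ* (P0 + μ j • P1))
    (L : Matrix (Fin q) (Fin k) ℂ)
    (hL : ∀ j i, L j i = (v j ⬝ᵥ r i - l j ⬝ᵥ w i) / (μ j - lam i))
    (Lmat : Matrix (Fin q) (Fin p) ℂ) (hLmat : ∀ j a, Lmat j a = l j a)
    (R : Matrix (Fin m) (Fin k) ℂ) (hR : ∀ a i, R a i = r i a) :
    L = Lmat * P1 * R ∧ ∀ j i, L j i = l j ⬝ᵥ (P1 *ᵥ r i) := by
  have key : ∀ j i, L j i = l j ⬝ᵥ (P1 *ᵥ r i) := by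
    intro j i
    have hnum : v j ⬝ᵥ r i - l j ⬝ᵥ w i = (μ j - lam i) * (l j ⬝ᵥ (P1 *ᵥ r i)) := by
      rw [hv, hw, vecMul_add, add_dotProduct, add_mulVec, dotProduct_add,
        ← dotProduct_mulVec, ← dotProduct_mulVec, smul_mulVec, smul_mulVec,
        dotProduct_smul, dotProduct_smul, smul_eq_mul, smul_eq_mul]
      ring
    rw [hL, hnum, mul_comm, mul_div_assoc, div_self (sub_ne_zero.mpr (hne j i)), mul_one]
  refine ⟨?_, key⟩
  ext j i
  rw [key j i]
  simp [Matrix.mul_apply, mulVec, dotProduct, hLmat, hR, Finset.mul_sum, Finset.sum_mul]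
  rw [Finset.sum_comm]
  apply Finset.sum_congr rfl; intro a _; apply Finset.sum_congr rfl; intro b _; ring
end

section
/- Let P_0, P_1 ∈ ℝ^{p×m} be real matrices, H(s) = P_0 + s·P_1, and suppose the interpolation points are purely imaginary: μ_j = i·α_j and λ_i = i·β_i with α_j, β_i ∈ ℝ and μ_j ≠ λ_i for all j, i. Let the tangential directions ℓ_j ∈ ℝ^p and r_i ∈ ℝ^m be real, and generate w_i = H(λ_i)r_i and v_jᵀ = ℓ_jᵀH(μ_j). Then the entrywise real part of the shifted Loewner matrix recovers P_0: Re((𝕃s)_{ji}) = ℓ_jᵀ P_0 r_i for all j, i; equivalently Re(𝕃s) = L·P_0·R, where L is the q×p matrix with rows ℓ_jᵀ and R is the m×k matrix with columns r_i. -/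
open Matrix Complex

lemma aux_dot (p m : ℕ) (P : Matrix (Fin p) (Fin m) ℝ) (l : Fin p → ℝ) (r : Fin m → ℝ) :
    (fun a => ((l a : ℝ) : ℂ)) ⬝ᵥ ((P.map Complex.ofReal) *ᵥ (fun a => ((r a : ℝ) : ℂ)))
      = ((l ⬝ᵥ (P *ᵥ r) : ℝ) : ℂ) := by
  simp only [dotProduct, mulVec, Matrix.map_apply]
  push_cast
  ring

/-- For real `P₀, P₁`, purely imaginary interpolation points and real tangential
directions, the entrywise real part of the shifted Loewner matrix recovers `P₀`:
`Re((𝕃s)_{ji}) = ℓ_jᵀ P₀ r_i` for all `j, i`; equivalently `Re(𝕃s) = L·P₀·R`. -/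
theorem real_part_shifted_loewner_recovers_P0
    (q k p m : ℕ) (P0 P1 : Matrix (Fin p) (Fin m) ℝ)
    (α : Fin q → ℝ) (β : Fin k → ℝ)
    (μ : Fin q → ℂ) (lam : Fin k → ℂ)
    (hμ : ∀ j, μ j = Complex.I * α j) (hlam : ∀ i, lam i = Complex.I * β i)
    (hne : ∀ j i, μ j ≠ lam i)
    (l : Fin q → Fin p → ℝ) (r : Fin k → Fin m → ℝ)
    (w : Fin k → Fin p → ℂ)
    (hw : ∀ i, w i = (P0.map Complex.ofReal + lam i • P1.map Complex.ofReal) *ᵥ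
      (fun a => ((r i a : ℝ) : ℂ)))
    (v : Fin q → Fin m → ℂ)
    (hv : ∀ j, v j = (fun a => ((l j a : ℝ) : ℂ)) ᵥ*
      (P0.map Complex.ofReal + μ j • P1.map Complex.ofReal))
    (Ls : Matrix (Fin q) (Fin k) ℂ)
    (hLs : ∀ j i, Ls j i =
      (μ j * (v j ⬝ᵥ fun a => ((r i a : ℝ) : ℂ))
        - lam i * ((fun a => ((l j a : ℝ) : ℂ)) ⬝ᵥ w i)) / (μ j - lam i))
    (Lmat : Matrix (Fin q) (Fin p) ℝ) (hLmat : ∀ j a, Lmat j a = l j a)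
    (R : Matrix (Fin m) (Fin k) ℝ) (hR : ∀ a i, R a i = r i a) :
    (∀ j i, (Ls j i).re = l j ⬝ᵥ (P0 *ᵥ r i)) ∧
      Ls.map Complex.re = Lmat * P0 * R := by
  have key : ∀ j i, Ls j i = ((l j ⬝ᵥ (P0 *ᵥ r i) : ℝ) : ℂ)
      + (μ j + lam i) * ((l j ⬝ᵥ (P1 *ᵥ r i) : ℝ) : ℂ) := by
    intro j i
    have h1 : v j ⬝ᵥ (fun a => ((r i a : ℝ) : ℂ))
        = ((l j ⬝ᵥ (P0 *ᵥ r i) : ℝ) : ℂ) + μ j * ((l j ⬝ᵥ (P1 *ᵥ r i) : ℝ) : ℂ) := by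
      rw [hv, ← dotProduct_mulVec, add_mulVec, smul_mulVec, dotProduct_add,
        dotProduct_smul, aux_dot, aux_dot, smul_eq_mul]
    have h2 : (fun a => ((l j a : ℝ) : ℂ)) ⬝ᵥ w i
        = ((l j ⬝ᵥ (P0 *ᵥ r i) : ℝ) : ℂ) + lam i * ((l j ⬝ᵥ (P1 *ᵥ r i) : ℝ) : ℂ) := by
      rw [hw, add_mulVec, smul_mulVec, dotProduct_add,
        dotProduct_smul, aux_dot, aux_dot, smul_eq_mul]
    rw [hLs, h1, h2, div_eq_iff (sub_ne_zero.mpr (hne j i))]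
    ring
  have hre : ∀ j i, (Ls j i).re = l j ⬝ᵥ (P0 *ᵥ r i) := by
    intro j i
    rw [key, hμ, hlam]
    simp [Complex.add_re, Complex.mul_re]
  refine ⟨hre, ?_⟩
  ext j i
  simp only [Matrix.map_apply, hre j i, Matrix.mul_apply, dotProduct, mulVec,
    hLmat, hR, Finset.sum_mul, Finset.mul_sum]
  rw [Finset.sum_comm]
  simp [mul_assoc]
end
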